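/- arXiv:2402.01006 — 8 statements merged into one kernel-verified Lean document; each statement's English description precedes it below -/
import Mathlib

section
/- Let Γ⃗ be a directed graph on n vertices in which every vertex has out-degree at most 1, and suppose exactly m vertices have out-degree 0. Then the undirected underlying graph Γ of Γ⃗ contains an independent set of size at least m + ⌈(n−2m)/3⌉. -/
/-! Induction on a vertex set `S`, keeping `#S + #(sinks of S) ≤ 3 * #s` for an independent
`s ⊆ S`. It suffices to find `v ∈ S` whose closed neighbourhood `N` satisfies
`#N + #(N ∩ sinks) ≤ 3`: put `v` into an independent set of `S \ N`, whose sinks include those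
of `S` outside `N`. A vertex without in-neighbours has `#N ≤ 2`, and `N` contains at most one sink
besides `v` itself (which is a sink only when `N = {v}`). If every vertex has an in-neighbour,
counting arcs forces all in- and out-degrees to be `1`, so there are no sinks and `#N ≤ 3`. -/

open SimpleGraph

variable {V W : Type*}

/-- Two `Sym2` elements (edges) are vertex-disjoint. -/
def sym2Disjoint (e e' : Sym2 V) : Prop := ∀ v, v ∈ e → v ∉ e'

/-- Edge set of the copy of `G` in `H` given by an (injective) homomorphism. -/
def copyEdges (G : SimpleGraph V) (H : SimpleGraph W) (φ : G →g H) : Set (Sym2 W) :=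
  Sym2.map φ '' G.edgeSet

/-- The edge set `E` is `f`-free. -/
def IsFreeSet (f : Sym2 W → Sym2 W) (E : Set (Sym2 W)) : Prop := ∀ e ∈ E, f e ∉ E

/-- `f` is an edge mapping of `H` with `f e ≠ e` (equivalently `|f e ∩ e| ≤ 1`). -/
def IsEdgeMap (H : SimpleGraph W) (f : Sym2 W → Sym2 W) : Prop :=
  ∀ e ∈ H.edgeSet, f e ∈ H.edgeSet ∧ f e ≠ e

/-- `f` is an edge mapping of `H` with `f e ∩ e = ∅`. -/
def IsDisjEdgeMap (H : SimpleGraph W) (f : Sym2 W → Sym2 W) : Prop :=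
  ∀ e ∈ H.edgeSet, f e ∈ H.edgeSet ∧ sym2Disjoint e (f e)

/-- `H` contains a copy of `G` (as a not necessarily induced subgraph). -/
def Contains (G : SimpleGraph V) (H : SimpleGraph W) : Prop :=
  ∃ φ : G →g H, Function.Injective φ

/-- `H` has no `f`-free copy of `G`. -/
def NoFreeCopy (G : SimpleGraph V) (H : SimpleGraph W) (f : Sym2 W → Sym2 W) : Prop :=
  ∀ φ : G →g H, Function.Injective φ → ¬ IsFreeSet f (copyEdges G H φ)

/-- The Turán number `ex(n, G)`. -/
noncomputable def exNum (n : ℕ) (G : SimpleGraph V) : ℕ :=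
  sSup {m | ∃ H : SimpleGraph (Fin n), H.edgeSet.ncard = m ∧ ¬ Contains G H}

/-- The parameter `h(n, G)`. -/
noncomputable def hNum (n : ℕ) (G : SimpleGraph V) : ℕ :=
  sSup {m | ∃ (H : SimpleGraph (Fin n)) (f : Sym2 (Fin n) → Sym2 (Fin n)),
    H.edgeSet.ncard = m ∧ IsEdgeMap H f ∧ NoFreeCopy G H f}

/-- Independence number. -/
noncomputable def indepNum (G : SimpleGraph V) [Fintype V] : ℕ :=
  sSup {m | ∃ s : Finset V, (∀ v ∈ s, ∀ w ∈ s, ¬ G.Adj v w) ∧ s.card = m}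

/-- The matching `tK₂` on `Fin (2t)`: vertices `2i, 2i+1` are matched. -/
def matching (t : ℕ) : SimpleGraph (Fin (2*t)) :=
  SimpleGraph.fromRel (fun v w => (v : ℕ) / 2 = (w : ℕ) / 2)

/-- The star `K_{1,r}` on `Fin (r+1)`, with center `0`. -/
def starG (r : ℕ) : SimpleGraph (Fin (r+1)) :=
  SimpleGraph.fromRel (fun v _ => v = 0)

section FunctionalDigraph

open Finset

variable {α : Type*} [DecidableEq α] (A : α → α → Prop) [DecidableRel A]

def outNbrs (S : Finset α) (v : α) : Finset α := {w ∈ S | v ≠ w ∧ A v w}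

def inNbrs (S : Finset α) (v : α) : Finset α := {w ∈ S | w ≠ v ∧ A w v}

def closedNbhd (S : Finset α) (v : α) : Finset α := insert v (outNbrs A S v ∪ inNbrs A S v)

def sinks (S : Finset α) : Finset α := {v ∈ S | outNbrs A S v = ∅}

variable {A}

lemma card_outNbrs_le_one (hA : Relator.RightUnique A) (S : Finset α) (v : α) :
    #(outNbrs A S v) ≤ 1 :=
  card_le_one.mpr fun _ hw _ hw' => hA (mem_filter.mp hw).2.2 (mem_filter.mp hw').2.2

lemma card_closedNbhd_le (S : Finset α) (v : α) :
    #(closedNbhd A S v) ≤ #(outNbrs A S v) + #(inNbrs A S v) + 1 :=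
  (card_insert_le _ _).trans (Nat.add_le_add_right (card_union_le _ _) 1)

lemma mem_closedNbhd_of_adj {S : Finset α} {v w : α} (hw : w ∈ S)
    (hvw : (fromRel A).Adj v w) : w ∈ closedNbhd A S v := by
  obtain ⟨hne, hA | hA⟩ := (fromRel_adj A v w).mp hvw
  · exact mem_insert_of_mem <| mem_union_left _ <| mem_filter.mpr ⟨hw, hne, hA⟩
  · exact mem_insert_of_mem <| mem_union_right _ <| mem_filter.mpr ⟨hw, hne.symm, hA⟩

lemma closedNbhd_subset {S : Finset α} {v : α} (hv : v ∈ S) : closedNbhd A S v ⊆ S :=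
  insert_subset hv (union_subset (filter_subset _ _) (filter_subset _ _))

lemma mem_sinks_of_subset {S S' : Finset α} (hS : S' ⊆ S) {v : α} (hv : v ∈ S')
    (hsink : v ∈ sinks A S) : v ∈ sinks A S' := by
  refine mem_filter.mpr ⟨hv, filter_eq_empty_iff.mpr fun w hw hvw => ?_⟩
  exact filter_eq_empty_iff.mp (mem_filter.mp hsink).2 (hS hw) hvw

lemma card_sinks_le_card_sinks_sdiff_add (S T : Finset α) :
    #(sinks A S) ≤ #(sinks A (S \ T)) + #(T ∩ sinks A S) := by
  refine (card_le_card fun v hv => ?_).trans (card_union_le _ _)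
  by_cases hvT : v ∈ T
  · exact mem_union_right _ (mem_inter.mpr ⟨hvT, hv⟩)
  · exact mem_union_left _ <|
      mem_sinks_of_subset sdiff_subset (mem_sdiff.mpr ⟨(mem_filter.mp hv).1, hvT⟩) hv

/-- If every vertex has an in-neighbour, the in-degrees sum to at least `#S` while the
out-degrees sum to at most `#S`; both sums count the same arcs. -/
lemma card_inNbrs_eq_one_and_card_outNbrs_eq_one (hA : Relator.RightUnique A) {S : Finset α}
    (hin : ∀ v ∈ S, (inNbrs A S v).Nonempty) :
    ∀ v ∈ S, #(inNbrs A S v) = 1 ∧ #(outNbrs A S v) = 1 := by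
  have harcs : ∑ v ∈ S, #(outNbrs A S v) = ∑ v ∈ S, #(inNbrs A S v) :=
    sum_card_bipartiteAbove_eq_sum_card_bipartiteBelow fun v w => v ≠ w ∧ A v w
  have hout_sum : ∑ v ∈ S, #(outNbrs A S v) ≤ ∑ _v ∈ S, 1 :=
    sum_le_sum fun v _ => card_outNbrs_le_one hA S v
  have hin_sum : ∑ _v ∈ S, 1 ≤ ∑ v ∈ S, #(inNbrs A S v) :=
    sum_le_sum fun v hv => card_pos.mpr (hin v hv)
  have hin_eq := (sum_eq_sum_iff_of_le (f := fun _ => 1) (g := fun v => #(inNbrs A S v))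
    fun v hv => card_pos.mpr (hin v hv)).mp (by omega)
  have hout_eq := (sum_eq_sum_iff_of_le (s := S) (g := fun _ => 1)
    fun v _ => card_outNbrs_le_one hA S v).mp (by omega)
  exact fun v hv => ⟨(hin_eq v hv).symm, hout_eq v hv⟩

lemma exists_card_closedNbhd_add_card_inter_sinks_le_three (hA : Relator.RightUnique A)
    {S : Finset α} (hS : S.Nonempty) :
    ∃ v ∈ S, #(closedNbhd A S v) + #(closedNbhd A S v ∩ sinks A S) ≤ 3 := by
  by_cases hsource : ∃ v ∈ S, inNbrs A S v = ∅
  · obtain ⟨v, hv, hin⟩ := hsource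
    refine ⟨v, hv, ?_⟩
    have hN := card_closedNbhd_le (A := A) S v
    have hout := card_outNbrs_le_one hA S v
    rw [hin, card_empty] at hN
    by_cases hsink : outNbrs A S v = ∅
    · have := card_le_card (inter_subset_left (s₁ := closedNbhd A S v) (s₂ := sinks A S))
      rw [hsink, card_empty] at hN
      omega
    · have hsinks : closedNbhd A S v ∩ sinks A S ⊆ outNbrs A S v := by
        intro w hw
        obtain ⟨hwN, hwsink⟩ := mem_inter.mp hw
        rcases mem_insert.mp hwN with rfl | hw'
        · exact absurd (mem_filter.mp hwsink).2 hsink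
        · simpa [hin] using hw'
      have := card_le_card hsinks
      omega
  · push Not at hsource
    have hdeg := card_inNbrs_eq_one_and_card_outNbrs_eq_one hA hsource
    have hno_sinks : sinks A S = ∅ := filter_eq_empty_iff.mpr fun w hw hsink => by
      simpa [hsink] using (hdeg w hw).2
    obtain ⟨v, hv⟩ := hS
    refine ⟨v, hv, ?_⟩
    have hN := card_closedNbhd_le (A := A) S v
    rw [(hdeg v hv).1, (hdeg v hv).2] at hN
    rw [hno_sinks, inter_empty, card_empty]
    omega

lemma exists_isIndepSet_of_sdiff_closedNbhd {S : Finset α} {v : α} (hv : v ∈ S)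
    (hN : #(closedNbhd A S v) + #(closedNbhd A S v ∩ sinks A S) ≤ 3)
    (ih : ∃ s ⊆ S \ closedNbhd A S v, (fromRel A).IsIndepSet s ∧
      #(S \ closedNbhd A S v) + #(sinks A (S \ closedNbhd A S v)) ≤ 3 * #s) :
    ∃ s ⊆ S, (fromRel A).IsIndepSet s ∧ #S + #(sinks A S) ≤ 3 * #s := by
  obtain ⟨s, hsS, hind, hcard⟩ := ih
  have hvs : v ∉ s := fun h => (mem_sdiff.mp (hsS h)).2 (mem_insert_self _ _)
  refine ⟨insert v s, insert_subset hv (hsS.trans sdiff_subset), ?_, ?_⟩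
  · rw [coe_insert]
    refine hind.insert fun w hw _ => ?_
    obtain ⟨hwS, hwN⟩ := mem_sdiff.mp (hsS hw)
    have hvw : ¬(fromRel A).Adj v w := fun hvw => hwN (mem_closedNbhd_of_adj hwS hvw)
    exact ⟨hvw, fun hwv => hvw hwv.symm⟩
  · have := card_sdiff_add_card_eq_card (closedNbhd_subset (A := A) hv)
    have := card_sinks_le_card_sinks_sdiff_add (A := A) S (closedNbhd A S v)
    rw [card_insert_of_notMem hvs]
    omega

theorem exists_isIndepSet_card_add_card_sinks_le (hA : Relator.RightUnique A) (S : Finset α) :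
    ∃ s ⊆ S, (fromRel A).IsIndepSet s ∧ #S + #(sinks A S) ≤ 3 * #s := by
  induction S using Finset.strongInduction with
  | H S ih =>
    rcases S.eq_empty_or_nonempty with rfl | hS
    · exact ⟨∅, empty_subset _, by simp, by simp [sinks]⟩
    obtain ⟨v, hv, hN⟩ := exists_card_closedNbhd_add_card_inter_sinks_le_three hA hS
    exact exists_isIndepSet_of_sdiff_closedNbhd hv hN <|
      ih _ (sdiff_ssubset (closedNbhd_subset hv) ⟨v, mem_insert_self _ _⟩)

end FunctionalDigraph

/-- a digraph with out-degrees ≤ 1 and exactly m vertices of out-degree 0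
has an independent set of size ≥ m + ⌈(n-2m)/3⌉ in its underlying graph. -/
theorem stmt1 {n m : ℕ} (A : Fin n → Fin n → Prop) [DecidableRel A]
    (hd : ∀ v, (Finset.univ.filter (fun w => A v w)).card ≤ 1)
    (hm : (Finset.univ.filter
      (fun v => (Finset.univ.filter (fun w => A v w)).card = 0)).card = m) :
    ∃ s : Finset (Fin n), (∀ v ∈ s, ∀ w ∈ s, ¬ (SimpleGraph.fromRel A).Adj v w) ∧
      (m : ℤ) + ⌈((n : ℚ) - 2*m)/3⌉ ≤ (s.card : ℤ) := by
  have hA : Relator.RightUnique A := fun v w w' hw hw' =>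
    Finset.card_le_one.mp (hd v) w (by simpa using hw) w' (by simpa using hw')
  obtain ⟨s, -, hind, hcard⟩ := exists_isIndepSet_card_add_card_sinks_le hA Finset.univ
  have hm_le : m ≤ (sinks A Finset.univ).card := by
    rw [← hm]
    refine Finset.card_le_card fun v hv => ?_
    simp only [Finset.mem_filter, Finset.mem_univ, true_and, Finset.card_eq_zero,
      Finset.filter_eq_empty_iff] at hv
    exact Finset.mem_filter.mpr ⟨Finset.mem_univ v,
      Finset.filter_eq_empty_iff.mpr fun w _ hvw => hv trivial hvw.2⟩
  refine ⟨s, fun v hv w hw hvw => hind hv hw (fromRel_adj _ v w |>.mp hvw).1 hvw, ?_⟩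
  suffices ⌈((n : ℚ) - 2*m)/3⌉ ≤ (s.card : ℤ) - m by linarith
  rw [Int.ceil_le, div_le_iff₀ (by norm_num)]
  rw [Finset.card_univ, Fintype.card_fin] at hcard
  have : (n : ℚ) + m ≤ 3 * s.card := by exact_mod_cast (by omega : n + m ≤ 3 * s.card)
  push_cast
  linarith
end

section
/- Let Γ⃗ be a directed graph on n vertices with every out-degree at most 1 and no vertex of out-degree 0, and suppose 3 divides n. Then the underlying undirected graph has an independent set of size exactly n/3 (i.e., the bound n/3 is not exceeded) if and only if Γ⃗ is a vertex-disjoint union of cyclically directed triangles. -/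
/-!
Encode the digraph by `g : α → α` with arcs `v → g v`. Greedily put a vertex `c` into the
independent set, delete its closed neighbourhood `D` and recurse, dropping the arcs that leave the
remaining vertices. If some vertex has no in-neighbour, take it as `c`: then `#D ≤ 2`. Otherwise
`g` permutes the vertices and `D` is a path through `c` of at most three vertices, which saves a
vertex unless `c` lies on a directed triangle. Hence the independence number is at least `n / 3`,
and strictly larger unless the digraph is a union of directed triangles. Conversely, in a union
of directed triangles an independent set `S` is disjoint from `g S` and `g (g S)`, so
`3 #S ≤ n`.
-/

open SimpleGraph

variable {V W : Type*}

open Finset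

lemma indepNum_eq_simpleGraph_indepNum {V : Type*} [Fintype V] (G : SimpleGraph V) :
    _root_.indepNum G = G.indepNum := by
  unfold _root_.indepNum SimpleGraph.indepNum
  congr! 3
  refine exists_congr fun s => ?_
  rw [isNIndepSet_iff, isIndepSet_iff]
  refine and_congr ⟨fun h v hv w hw _ => h v hv w hw, fun h v hv w hw => ?_⟩ Iff.rfl
  rcases eq_or_ne v w with rfl | hne
  · exact G.loopless.irrefl v
  · exact h hv hw hne

section FunctionalDigraph

variable {α : Type*} {g : α → α}

/-- As `fromRel` drops loops, a fixed point of `g` is a vertex of out-degree `0`. -/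
def funcGraph (g : α → α) : SimpleGraph α := fromRel fun v w => g v = w

lemma funcGraph_adj {v w : α} : (funcGraph g).Adj v w ↔ v ≠ w ∧ (g v = w ∨ g w = v) :=
  fromRel_adj ..

def IsTriangleFactor (g : α → α) (s : Finset α) : Prop :=
  ∀ v ∈ s, g v ∈ s ∧ g v ≠ v ∧ g (g (g v)) = v

lemma isTriangleFactor_univ_iff [Fintype α] :
    IsTriangleFactor g univ ↔ ∀ v, g v ≠ v ∧ g (g (g v)) = v := by
  simp [IsTriangleFactor]

lemma isIndepSet_insert_of_subset_sdiff [DecidableEq α] {s D S : Finset α} {c : α}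
    (hgcD : g c ∈ D) (hpre : ∀ u ∈ s, g u = c → u ∈ D) (hSs : S ⊆ s \ D)
    (hS : (funcGraph g).IsIndepSet (S : Set α)) :
    (funcGraph g).IsIndepSet (insert c S : Finset α) := by
  rw [coe_insert, IsIndepSet, Set.pairwise_insert]
  refine ⟨hS, fun w hw hcw => ?_⟩
  obtain ⟨hws, hwD⟩ := mem_sdiff.1 (hSs hw)
  have hnadj : ¬ (funcGraph g).Adj c w := by
    rw [funcGraph_adj]
    rintro ⟨-, rfl | hgw⟩
    · exact hwD hgcD
    · exact hwD (hpre w hws hgw)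
  exact ⟨hnadj, fun h => hnadj h.symm⟩

lemma mapsTo_and_injOn_of_forall_exists_preimage [DecidableEq α] {s : Finset α}
    (h : ∀ c ∈ s, ∃ u ∈ s, g u = c) : Set.MapsTo g s s ∧ Set.InjOn g s := by
  set t := s.filter (g · ∈ s)
  have hsurj : Set.SurjOn g t s := fun c hc => by
    obtain ⟨u, hu, rfl⟩ := h c hc
    exact ⟨u, mem_filter.2 ⟨hu, hc⟩, rfl⟩
  have hts : t = s := eq_of_subset_of_card_le (filter_subset _ _) (card_le_card_of_surjOn g hsurj)
  have hmaps : Set.MapsTo g s s := fun v hv => (mem_filter.1 (hts.symm ▸ hv : v ∈ t)).2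
  exact ⟨hmaps, injOn_of_surjOn_of_card_le g hmaps (hts ▸ hsurj) le_rfl⟩

/-- On a cycle of length at least four, removing `u → g u → g (g u)` leaves the predecessor of
`u` without out-neighbour. -/
lemma card_le_two_or_not_isTriangleFactor_sdiff [DecidableEq α] {s : Finset α}
    (hinj : Set.InjOn g s) (hsurj : ∀ c ∈ s, ∃ u ∈ s, g u = c) {u : α} (hu : u ∈ s)
    (hgu : g u ∈ s) (hbad : ¬ (g (g u) ≠ g u ∧ g (g (g (g u))) = g u)) :
    #{u, g u, g (g u)} ≤ 2 ∨ ¬ IsTriangleFactor g (s \ {u, g u, g (g u)}) := by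
  by_cases h1 : g (g u) = g u
  · left
    simp [hinj hgu hu h1]
  by_cases h2 : g (g u) = u
  · left
    rw [h2]
    exact (card_le_card (by simp [subset_iff])).trans (card_le_two (a := u) (b := g u))
  right
  have h3 : g (g (g u)) ≠ u := fun h => hbad ⟨h1, by rw [h]⟩
  obtain ⟨t, ht, rfl⟩ := hsurj u hu
  intro htri
  have htD : t ∉ ({g t, g (g t), g (g (g t))} : Finset α) := by
    simp only [mem_insert, mem_singleton, not_or]
    exact ⟨fun h => h1 (by simp only [← h]), fun h => h2 (by simp only [← h]),
      fun h => h3 (by simp only [← h])⟩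
  exact (mem_sdiff.1 (htri t (mem_sdiff.2 ⟨ht, htD⟩)).1).2 (mem_insert_self _ _)

lemma exists_greedy_step [DecidableEq α] {s : Finset α} (hs : s.Nonempty) :
    ∃ c ∈ s, ∃ D : Finset α, c ∈ D ∧ g c ∈ D ∧ (∀ u ∈ s, g u = c → u ∈ D) ∧ #D ≤ 3 ∧
      (¬ IsTriangleFactor g s → #D ≤ 2 ∨ ¬ IsTriangleFactor g (s \ D)) := by
  by_cases hsource : ∃ c ∈ s, ∀ u ∈ s, g u ≠ c
  · obtain ⟨c, hc, hsource⟩ := hsource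
    exact ⟨c, hc, {c, g c}, mem_insert_self _ _, by simp, fun u hu h => absurd h (hsource u hu),
      card_le_two.trans (by norm_num), fun _ => .inl card_le_two⟩
  push Not at hsource
  obtain ⟨hmaps, hinj⟩ := mapsTo_and_injOn_of_forall_exists_preimage hsource
  obtain ⟨c, hc, hcbad⟩ : ∃ c ∈ s, ¬ IsTriangleFactor g s → ¬ (g c ≠ c ∧ g (g (g c)) = c) := by
    by_cases htri : IsTriangleFactor g s
    · obtain ⟨c, hc⟩ := hs
      exact ⟨c, hc, fun h => absurd htri h⟩
    · simp only [IsTriangleFactor, not_forall] at htri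
      obtain ⟨c, hc, hbad⟩ := htri
      exact ⟨c, hc, fun _ h => hbad ⟨hmaps hc, h⟩⟩
  obtain ⟨u, hu, rfl⟩ := hsource c hc
  refine ⟨g u, hc, {u, g u, g (g u)}, by simp, by simp, fun w hw h => ?_, card_le_three,
    fun htri => card_le_two_or_not_isTriangleFactor_sdiff hinj hsource hu hc (hcbad htri)⟩
  simp [hinj hw hu h]

theorem exists_isIndepSet_card_le_three_mul [DecidableEq α] (s : Finset α) :
    ∃ S ⊆ s, (funcGraph g).IsIndepSet (S : Set α) ∧ #s ≤ 3 * #S ∧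
      (¬ IsTriangleFactor g s → #s < 3 * #S) := by
  induction s using Finset.strongInduction with
  | H s ih =>
  rcases s.eq_empty_or_nonempty with rfl | hs
  · exact ⟨∅, subset_rfl, by simp, by simp, fun h => absurd (by simp [IsTriangleFactor]) h⟩
  obtain ⟨c, hc, D, hcD, hgcD, hpre, hD3, hDbad⟩ := exists_greedy_step hs
  obtain ⟨S, hSs, hS, hle, hlt⟩ :=
    ih (s \ D) (sdiff_lt_left.2 (not_disjoint_iff.2 ⟨c, hcD, hc⟩))
  have hcS : c ∉ S := fun h => (mem_sdiff.1 (hSs h)).2 hcD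
  have hcard : #s ≤ #(s \ D) + #D := card_le_card_sdiff_add_card
  refine ⟨insert c S, insert_subset hc (hSs.trans sdiff_subset),
    isIndepSet_insert_of_subset_sdiff hgcD hpre hSs hS, ?_, fun htri => ?_⟩
  · rw [card_insert_of_notMem hcS]
    omega
  · rw [card_insert_of_notMem hcS]
    rcases hDbad htri with hD2 | hsD
    · omega
    · have := hlt hsD
      omega

theorem three_mul_card_le_of_isTriangleFactor [DecidableEq α] {s S : Finset α}
    (htri : IsTriangleFactor g s) (hSs : S ⊆ s) (hS : (funcGraph g).IsIndepSet (S : Set α)) :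
    3 * #S ≤ #s := by
  have hinj : Set.InjOn g s := fun v hv w hw h => by
    rw [← (htri v hv).2.2, ← (htri w hw).2.2, h]
  have hgS : S.image g ⊆ s := image_subset_iff.2 fun v hv => (htri v (hSs hv)).1
  have hggS : (S.image g).image g ⊆ s := image_subset_iff.2 fun v hv => (htri v (hgS hv)).1
  have hno_arc : ∀ v ∈ S, ∀ w ∈ S, g v ≠ w := by
    intro v hv w hw h
    have hvw : v ≠ w := fun hvw => (htri v (hSs hv)).2.1 (h.trans hvw.symm)
    exact hS hv hw hvw (funcGraph_adj.2 ⟨hvw, .inl h⟩)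
  have h01 : Disjoint S (S.image g) := disjoint_left.2 fun w hw hw' => by
    obtain ⟨v, hv, rfl⟩ := mem_image.1 hw'
    exact hno_arc v hv _ hw rfl
  have h02 : Disjoint S ((S.image g).image g) := disjoint_left.2 fun w hw hw' => by
    obtain ⟨_, hv', rfl⟩ := mem_image.1 hw'
    obtain ⟨v, hv, rfl⟩ := mem_image.1 hv'
    exact hno_arc _ hw v hv (htri v (hSs hv)).2.2
  have h12 : Disjoint (S.image g) ((S.image g).image g) := disjoint_left.2 fun w hw hw' => by
    obtain ⟨a, ha, rfl⟩ := mem_image.1 hw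
    obtain ⟨_, hb', hab⟩ := mem_image.1 hw'
    obtain ⟨b, hb, rfl⟩ := mem_image.1 hb'
    exact hno_arc b hb a ha (hinj (hgS hb') (hSs ha) hab)
  calc 3 * #S = #(S ∪ S.image g ∪ (S.image g).image g) := by
        rw [card_union_of_disjoint (disjoint_union_left.2 ⟨h02, h12⟩), card_union_of_disjoint h01,
          card_image_of_injOn (hinj.mono hgS), card_image_of_injOn (hinj.mono hSs)]
        ring
    _ ≤ #s := card_le_card (union_subset (union_subset hSs hgS) hggS)

end FunctionalDigraph

/-- for a digraph with all out-degrees exactly 1 (i.e. a function `g`)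
on n vertices, 3 ∣ n, the underlying graph has independence number exactly n/3
iff the digraph is a disjoint union of cyclically directed triangles
(i.e. `g` has no fixed points and `g ∘ g ∘ g = id`). -/
theorem stmt2 {n : ℕ} (hn : 3 ∣ n) (g : Fin n → Fin n) :
    _root_.indepNum (SimpleGraph.fromRel (fun v w => g v = w)) = n / 3 ↔
      ∀ v, g v ≠ v ∧ g (g (g v)) = v := by
  obtain ⟨k, rfl⟩ := hn
  change _root_.indepNum (funcGraph g) = _ ↔ _
  rw [indepNum_eq_simpleGraph_indepNum, Nat.mul_div_cancel_left k three_pos,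
    ← isTriangleFactor_univ_iff]
  obtain ⟨S, -, hS, hle, hlt⟩ := exists_isIndepSet_card_le_three_mul (g := g) univ
  have hSα := hS.card_le_indepNum
  rw [card_univ, Fintype.card_fin] at hle hlt
  refine ⟨fun hα => by_contra fun htri => ?_, fun htri => ?_⟩
  · have := hlt htri
    omega
  · obtain ⟨I, hI⟩ := (funcGraph g).exists_isNIndepSet_indepNum
    have := three_mul_card_le_of_isTriangleFactor htri (subset_univ I) hI.isIndepSet
    rw [hI.card_eq, card_univ, Fintype.card_fin] at this
    omega
end

section
/- For every graph G with at least two edges and every n ≥ |V(G)|, there exist an n-vertex graph H' with ex(n,G)+1 edges and a function f: E(H') → E(H') with f(e) ≠ e for all e, such that H' contains no f-free copy of G. Consequently h(n,G) > ex(n,G). -/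
open SimpleGraph

variable {V W : Type*}

lemma ncard_le_bound (n : ℕ) (H : SimpleGraph (Fin n)) :
    H.edgeSet.ncard ≤ Nat.card (Sym2 (Fin n)) := by
  calc H.edgeSet.ncard ≤ (Set.univ : Set (Sym2 (Fin n))).ncard :=
        Set.ncard_le_ncard (Set.subset_univ _) Set.finite_univ
    _ = _ := Set.ncard_univ _

/-- for any graph G with at least two edges and n ≥ |V(G)|, there is an
n-vertex graph with ex(n,G)+1 edges and an edge mapping with no f-free copy of G;
consequently h(n,G) > ex(n,G). -/
theorem stmt3 {V : Type*} [Fintype V] (G : SimpleGraph V)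
    (hG : 2 ≤ G.edgeSet.ncard) (n : ℕ) (hn : Fintype.card V ≤ n) :
    (∃ (H : SimpleGraph (Fin n)) (f : Sym2 (Fin n) → Sym2 (Fin n)),
      H.edgeSet.ncard = exNum n G + 1 ∧ IsEdgeMap H f ∧ NoFreeCopy G H f) ∧
    exNum n G < hNum n G := by
  classical
  obtain ⟨a, b, ha, hb, hab⟩ :=
    (Set.one_lt_ncard_iff (Set.toFinite _)).mp (lt_of_lt_of_le one_lt_two hG)
  obtain ⟨u, v, huv⟩ := Sym2.exists.mp ⟨a, ha⟩
  rw [SimpleGraph.mem_edgeSet] at huv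
  -- n ≥ 2
  have hn2 : 2 ≤ n := le_trans (Fintype.one_lt_card_iff.mpr ⟨u, v, huv.ne⟩) hn
  set S := {m | ∃ H : SimpleGraph (Fin n), H.edgeSet.ncard = m ∧ ¬ Contains G H} with hS
  have hbdd : BddAbove S := by
    refine ⟨Nat.card (Sym2 (Fin n)), ?_⟩
    rintro m ⟨H, rfl, -⟩
    exact ncard_le_bound n H
  have h0 : (0 : ℕ) ∈ S := by
    refine ⟨⊥, by simp, ?_⟩
    rintro ⟨φ, -⟩
    simpa using φ.map_adj huv
  -- 1 ∈ S : the single edge graph does not contain G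
  have h1 : (1 : ℕ) ∈ S := by
    set x₀ : Fin n := ⟨0, by omega⟩
    set x₁ : Fin n := ⟨1, by omega⟩
    have hx : x₀ ≠ x₁ := by simp [x₀, x₁, Fin.ext_iff]
    refine ⟨SimpleGraph.fromEdgeSet {s(x₀, x₁)}, ?_, ?_⟩
    · have : (SimpleGraph.fromEdgeSet {s(x₀, x₁)}).edgeSet = {s(x₀, x₁)} := by
        rw [SimpleGraph.edgeSet_fromEdgeSet]
        ext e
        simp only [Set.mem_diff, Set.mem_singleton_iff, Set.mem_setOf_eq]
        constructor
        · exact fun h => h.1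
        · rintro rfl; exact ⟨rfl, by simp [Sym2.mk_isDiag_iff, hx]⟩
      rw [this]; simp
    · rintro ⟨φ, hinj⟩
      have hma := SimpleGraph.Hom.map_mem_edgeSet φ ha
      have hmb := SimpleGraph.Hom.map_mem_edgeSet φ hb
      rw [SimpleGraph.edgeSet_fromEdgeSet] at hma hmb
      have : Sym2.map φ a = Sym2.map φ b := by
        rw [hma.1, hmb.1]
      exact hab (Sym2.map.injective hinj this)
  have hex1 : 1 ≤ exNum n G := le_csSup hbdd h1
  obtain ⟨H, hHcard, hHfree⟩ : exNum n G ∈ S := Nat.sSup_mem ⟨0, h0⟩ hbdd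
  -- H is not complete : get a non-edge
  have hnotall : ∃ x y : Fin n, x ≠ y ∧ ¬ H.Adj x y := by
    by_contra hc
    push_neg at hc
    obtain ⟨ι⟩ : Nonempty (V ↪ Fin n) :=
      Function.Embedding.nonempty_iff_card_le.mpr (by simpa using hn)
    exact hHfree ⟨⟨⇑ι, fun {p q} hadj => hc _ _ (fun h => hadj.ne (ι.injective h))⟩, ι.injective⟩
  obtain ⟨x, y, hxy, hnadj⟩ := hnotall
  set e₀ : Sym2 (Fin n) := s(x, y) with he₀def
  have he₀ : e₀ ∉ H.edgeSet := by rwa [SimpleGraph.mem_edgeSet]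
  set H' : SimpleGraph (Fin n) := H ⊔ SimpleGraph.fromEdgeSet {e₀} with hH'def
  have hE' : H'.edgeSet = insert e₀ H.edgeSet := by
    rw [hH'def, SimpleGraph.edgeSet_sup, SimpleGraph.edgeSet_fromEdgeSet]
    ext e
    simp only [Set.mem_union, Set.mem_diff, Set.mem_singleton_iff, Set.mem_setOf_eq,
      Set.mem_insert_iff]
    constructor
    · rintro (h | ⟨rfl, -⟩)
      · exact Or.inr h
      · exact Or.inl rfl
    · rintro (rfl | h)
      · exact Or.inr ⟨rfl, by simp [he₀def, Sym2.mk_isDiag_iff, hxy]⟩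
      · exact Or.inl h
  have hcard : H'.edgeSet.ncard = exNum n G + 1 := by
    rw [hE', Set.ncard_insert_of_notMem he₀ (Set.toFinite _), hHcard]
  -- a second edge
  obtain ⟨e₁, he₁⟩ : H.edgeSet.Nonempty := by
    apply Set.nonempty_of_ncard_ne_zero; rw [hHcard]; omega
  have he₁ne : e₁ ≠ e₀ := fun h => he₀ (h ▸ he₁)
  set f : Sym2 (Fin n) → Sym2 (Fin n) := fun e => if e = e₀ then e₁ else e₀ with hfdef
  have hmap : IsEdgeMap H' f := by
    intro e he
    by_cases h : e = e₀
    · simp only [hfdef, h, if_pos rfl]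
      exact ⟨hE' ▸ Set.mem_insert_of_mem _ he₁, he₁ne⟩
    · simp only [hfdef, if_neg h]
      exact ⟨hE' ▸ Set.mem_insert _ _, Ne.symm h⟩
  have hnofree : NoFreeCopy G H' f := by
    intro φ hinj hfree
    have hsub : copyEdges G H' φ ⊆ H'.edgeSet := by
      rintro e ⟨c, hc, rfl⟩
      exact SimpleGraph.Hom.map_mem_edgeSet φ hc
    have hma : Sym2.map φ a ∈ copyEdges G H' φ := ⟨a, ha, rfl⟩
    have hmb : Sym2.map φ b ∈ copyEdges G H' φ := ⟨b, hb, rfl⟩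
    have hmab : Sym2.map φ a ≠ Sym2.map φ b := fun h => hab (Sym2.map.injective hinj h)
    have h0mem : e₀ ∈ copyEdges G H' φ := by
      by_contra h0
      refine hHfree ⟨⟨⇑φ, fun {p q} hadj => ?_⟩, hinj⟩
      have hmem : s(φ p, φ q) ∈ copyEdges G H' φ := ⟨s(p, q), hadj, rfl⟩
      have := hsub hmem
      rw [hE'] at this
      rcases this with h' | h'
      · exact absurd (h' ▸ hmem) h0
      · rwa [← SimpleGraph.mem_edgeSet]
    obtain ⟨e, he, hene⟩ : ∃ e ∈ copyEdges G H' φ, e ≠ e₀ := by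
      by_cases h : Sym2.map φ a = e₀
      · exact ⟨_, hmb, fun hb' => hmab (h.trans hb'.symm)⟩
      · exact ⟨_, hma, h⟩
    have : f e = e₀ := by simp [hfdef, hene]
    exact hfree e he (this ▸ h0mem)
  refine ⟨⟨H', f, hcard, hmap, hnofree⟩, ?_⟩
  have hbdd2 : BddAbove {m | ∃ (H : SimpleGraph (Fin n)) (f : Sym2 (Fin n) → Sym2 (Fin n)),
      H.edgeSet.ncard = m ∧ IsEdgeMap H f ∧ NoFreeCopy G H f} := by
    refine ⟨Nat.card (Sym2 (Fin n)), ?_⟩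
    rintro m ⟨H, f, rfl, -⟩
    exact ncard_le_bound n H
  have : exNum n G + 1 ≤ hNum n G := le_csSup hbdd2 ⟨H', f, hcard, hmap, hnofree⟩
  omega
end

section
/- Let H be an n-vertex graph, let m be the number of (unordered) pairs of disjoint edges of H (copies of 2K₂), and let m' be the number of edges of H that are contained in at least one copy of 2K₂. If m > m', then for every function f: E(H) → E(H) with f(e) ≠ e for all e, there exist two disjoint edges e, e' of H with f(e) ≠ e' and f(e') ≠ e. -/
open SimpleGraph

variable {V W : Type*}

/-- if H has more copies of 2K₂ than edges contained in a copy of 2K₂,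
then every edge mapping of H admits an f-free copy of 2K₂. -/
theorem stmt4 {V : Type*} [Fintype V] [DecidableEq V] (H : SimpleGraph V) (m m' : ℕ)
    (hm : m = {s : Finset (Sym2 V) | s.card = 2 ∧ ↑s ⊆ H.edgeSet ∧
        ∀ e ∈ s, ∀ e' ∈ s, e ≠ e' → sym2Disjoint e e'}.ncard)
    (hm' : m' = {e | e ∈ H.edgeSet ∧ ∃ e' ∈ H.edgeSet, sym2Disjoint e e'}.ncard)
    (h : m' < m) (f : Sym2 V → Sym2 V) (hf : IsEdgeMap H f) :
    ∃ e ∈ H.edgeSet, ∃ e' ∈ H.edgeSet, sym2Disjoint e e' ∧ f e ≠ e' ∧ f e' ≠ e := by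
    classical
  by_contra hcon
  push_neg at hcon
  set P : Set (Finset (Sym2 V)) := {s : Finset (Sym2 V) | s.card = 2 ∧ ↑s ⊆ H.edgeSet ∧
      ∀ e ∈ s, ∀ e' ∈ s, e ≠ e' → sym2Disjoint e e'} with hPdef
  set E' : Set (Sym2 V) := {e | e ∈ H.edgeSet ∧ ∃ e' ∈ H.edgeSet, sym2Disjoint e e'} with hE'def
  have hbad : ∀ s ∈ P, ∃ e, e ∈ s ∧ f e ∈ s ∧ f e ≠ e := by
    rintro s ⟨hcard, hsub, hdisj⟩
    obtain ⟨a, b, hab, rfl⟩ := Finset.card_eq_two.mp hcard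
    have ha : a ∈ H.edgeSet := hsub (by simp)
    have hb : b ∈ H.edgeSet := hsub (by simp)
    have hd : sym2Disjoint a b := hdisj a (by simp) b (by simp) hab
    rcases eq_or_ne (f a) b with h1 | h1
    · exact ⟨a, by simp, by simp [h1], by rw [h1]; exact hab.symm⟩
    · have h2 : f b = a := hcon a ha b hb hd h1
      exact ⟨b, by simp, by simp [h2], by rw [h2]; exact hab⟩
  -- get a fallback edge
  have hPne : P.Nonempty := by
    apply Set.nonempty_of_ncard_ne_zero
    omega
  obtain ⟨s0, hs0⟩ := hPne
  obtain ⟨e0, he0⟩ : s0.Nonempty := Finset.card_pos.mp (by rw [hs0.1]; norm_num)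
  set F : Finset (Sym2 V) → Sym2 V := fun s =>
    if h : ∃ e, e ∈ s ∧ f e ∈ s ∧ f e ≠ e then h.choose else e0 with hFdef
  have hFspec : ∀ s ∈ P, F s ∈ s ∧ f (F s) ∈ s ∧ f (F s) ≠ F s := by
    intro s hs
    have h := hbad s hs
    simp only [hFdef, dif_pos h]
    exact h.choose_spec
  have hFeq : ∀ s ∈ P, s = {F s, f (F s)} := by
    intro s hs
    obtain ⟨h1, h2, h3⟩ := hFspec s hs
    refine (Finset.eq_of_subset_of_card_le ?_ ?_).symm
    · intro x hx
      simp only [Finset.mem_insert, Finset.mem_singleton] at hx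
      rcases hx with rfl | rfl
      exacts [h1, h2]
    · rw [hs.1, Finset.card_insert_of_notMem (by simpa using h3.symm)]
      simp
  have hmaps : ∀ s ∈ P, F s ∈ E' := by
    intro s hs
    obtain ⟨h1, h2, h3⟩ := hFspec s hs
    obtain ⟨hcard, hsub, hdisj⟩ := hs
    exact ⟨hsub h1, f (F s), hsub h2, hdisj _ h1 _ h2 (Ne.symm h3)⟩
  have hinj : Set.InjOn F P := by
    intro s1 h1 s2 h2 heq
    rw [hFeq s1 h1, hFeq s2 h2, heq]
  have hle : P.ncard ≤ E'.ncard :=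
    Set.ncard_le_ncard_of_injOn F hmaps hinj (Set.toFinite _)
  omega
end

section
/- For every t ≥ 2 and every function f: E((3t−2)K₂) → E((3t−2)K₂) with f(e) ≠ e for all e, there exist t edges e₁,…,e_t of (3t−2)K₂ such that f(e_i) ∉ {e₁,…,e_t} for all i. Moreover, there is a function f: E((3t−3)K₂) → E((3t−3)K₂) with f(e) ≠ e for all e, such that no t edges e₁,…,e_t satisfy f(e_i) ∉ {e₁,…,e_t} for all i. -/
open SimpleGraph

variable {V W : Type*}

/-!
A map `f` without fixed points on a finite set `S` has an `f`-free subset of size at least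
`|S| / 3`: some `v ∈ S` has at most one preimage `w` in `S` (otherwise `f` permutes `S`), and `v`
can be added to any `f`-free subset of `S \ {v, f v, w}`. For sharpness, group the `3t - 3` edges
into `t - 1` triples and let `f` rotate each triple; among any `t` edges two lie in the same
triple, and one of them is mapped onto the other.
-/

open Finset

section FreeSubset

variable {α : Type*} (f : α → α)

lemma exists_mem_map_mem_of_card_lt {β : Type*} (p : α → β) {s : Finset α} {B : Finset β}
    (hp : ∀ e ∈ s, p e ∈ B) (hcard : #B < #s)
    (hblock : ∀ e ∈ s, ∀ e' ∈ s, e ≠ e' → p e = p e' → f e = e' ∨ f e' = e) :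
    ∃ e ∈ s, f e ∈ s := by
  obtain ⟨e, he, e', he', hne, hpe⟩ := exists_ne_map_eq_of_card_lt_of_maps_to hcard hp
  rcases hblock e he e' he' hne hpe with h | h
  · exact ⟨e, he, h ▸ he'⟩
  · exact ⟨e', he', h ▸ he⟩

variable [DecidableEq α]

lemma exists_mem_preimage_subsingleton {S : Finset α} (hS : S.Nonempty) :
    ∃ v ∈ S, ∃ w, ∀ e ∈ S, f e = v → e = w := by
  by_cases h : ∃ v ∈ S, ∀ e ∈ S, f e ≠ v
  · obtain ⟨v, hv, hv'⟩ := h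
    exact ⟨v, hv, v, fun e he hfe => absurd hfe (hv' e he)⟩
  push Not at h
  have hsurj : S ⊆ S.image f := fun v hv => by
    obtain ⟨w, hw, rfl⟩ := h v hv
    exact mem_image_of_mem f hw
  have hinj : Set.InjOn f S :=
    injOn_of_card_image_eq (le_antisymm card_image_le (card_le_card hsurj))
  obtain ⟨v, hv⟩ := hS
  obtain ⟨w, hw, hwv⟩ := h v hv
  exact ⟨v, hv, w, fun e he hfe => hinj he hw (hfe.trans hwv.symm)⟩

theorem exists_free_subset_card_le_three_mul_card (S : Finset α) (hf : ∀ e ∈ S, f e ≠ e) :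
    ∃ T ⊆ S, #S ≤ 3 * #T ∧ ∀ e ∈ T, f e ∉ T := by
  induction S using Finset.strongInduction with
  | H S ih =>
  rcases S.eq_empty_or_nonempty with rfl | hS
  · exact ⟨∅, empty_subset _, by simp, by simp⟩
  obtain ⟨v, hv, w, hw⟩ := exists_mem_preimage_subsingleton f hS
  set R : Finset α := {v, f v, w}
  have hsub : S \ R ⊂ S := (ssubset_iff_of_subset sdiff_subset).2 ⟨v, hv, by simp [R]⟩
  obtain ⟨T, hTS, hcard, hfree⟩ := ih (S \ R) hsub fun e he => hf e (mem_sdiff.1 he).1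
  have hvT : v ∉ T := fun h => (mem_sdiff.1 (hTS h)).2 (by simp [R])
  refine ⟨insert v T, insert_subset hv (hTS.trans sdiff_subset), ?_, ?_⟩
  · have hR : #R ≤ 3 := card_le_three
    have := card_le_card_sdiff_add_card (s := S) (t := R)
    rw [card_insert_of_notMem hvT]
    omega
  intro e he hfe
  rcases mem_insert.1 he with rfl | heT
  · rcases mem_insert.1 hfe with hfe | hfe
    · exact hf e hv hfe
    · exact (mem_sdiff.1 (hTS hfe)).2 (by simp [R])
  · obtain ⟨heS, heR⟩ := mem_sdiff.1 (hTS heT)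
    rcases mem_insert.1 hfe with hfe | hfe
    · exact heR (by simp [R, hw e heS hfe])
    · exact hfree e heT hfe

theorem exists_free_subset_card_eq (S : Finset α) (hf : ∀ e ∈ S, f e ≠ e) {t : ℕ}
    (ht : 3 * t ≤ #S + 2) : ∃ s ⊆ S, #s = t ∧ ∀ e ∈ s, f e ∉ s := by
  obtain ⟨T, hTS, hcard, hfree⟩ := exists_free_subset_card_le_three_mul_card f S hf
  obtain ⟨s, hsT, hst⟩ := exists_subset_card_eq (show t ≤ #T by omega)
  exact ⟨s, hsT.trans hTS, hst, fun e he hfe => hfree e (hsT he) (hsT hfe)⟩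

end FreeSubset

section Matching

variable {m : ℕ}

lemma matching_adj (v w : Fin (2 * m)) :
    (matching m).Adj v w ↔ v ≠ w ∧ (v : ℕ) / 2 = (w : ℕ) / 2 := by
  simp only [matching, fromRel_adj]
  grind

def matchingIndex {n : ℕ} : Sym2 (Fin n) → ℕ :=
  Sym2.lift ⟨fun v w => min ((v : ℕ) / 2) ((w : ℕ) / 2), fun _ _ => min_comm _ _⟩

lemma matchingIndex_lt {e : Sym2 (Fin (2 * m))} (he : e ∈ (matching m).edgeSet) :
    matchingIndex e < m := by
  induction e using Sym2.ind with
  | _ v w =>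
  rw [mem_edgeSet, matching_adj] at he
  simp only [matchingIndex, Sym2.lift_mk]
  omega

lemma matchingIndex_injOn : Set.InjOn matchingIndex (matching m).edgeSet := by
  intro e he e' he' h
  induction e using Sym2.ind with
  | _ v w =>
  induction e' using Sym2.ind with
  | _ v' w' =>
  rw [mem_edgeSet, matching_adj, ne_eq, Fin.ext_iff] at he he'
  simp only [matchingIndex, Sym2.lift_mk] at h
  simp only [Sym2.eq_iff, Fin.ext_iff]
  omega

lemma matchingIndex_image : matchingIndex '' (matching m).edgeSet = ↑(range m) := by
  refine Set.Subset.antisymm ?_ fun i hi => ?_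
  · rintro _ ⟨e, he, rfl⟩
    exact mem_range.2 (matchingIndex_lt he)
  have hi : i < m := mem_range.1 hi
  refine ⟨s(⟨2 * i, by omega⟩, ⟨2 * i + 1, by omega⟩), ?_, ?_⟩
  · simp only [mem_edgeSet, matching_adj, ne_eq, Fin.ext_iff]
    omega
  · simp only [matchingIndex, Sym2.lift_mk]
    omega

lemma ncard_edgeSet_matching : (matching m).edgeSet.ncard = m := by
  rw [← matchingIndex_injOn.ncard_image, matchingIndex_image, Set.ncard_coe_finset,
    card_range]

def rotateTriple (i : ℕ) : ℕ := 3 * (i / 3) + (i % 3 + 1) % 3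

lemma rotateTriple_ne (i : ℕ) : rotateTriple i ≠ i := by
  simp only [rotateTriple]
  omega

lemma rotateTriple_eq_or_eq {i j : ℕ} (hij : i ≠ j) (h : i / 3 = j / 3) :
    rotateTriple i = j ∨ rotateTriple j = i := by
  simp only [rotateTriple]
  omega

def rotateTripleVertex (hm : 3 ∣ m) (v : Fin (2 * m)) : Fin (2 * m) :=
  ⟨2 * rotateTriple (v / 2) + v % 2, by simp only [rotateTriple]; omega⟩

lemma map_rotateTripleVertex {hm : 3 ∣ m} {e : Sym2 (Fin (2 * m))}
    (he : e ∈ (matching m).edgeSet) :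
    e.map (rotateTripleVertex hm) ∈ (matching m).edgeSet ∧
      matchingIndex (e.map (rotateTripleVertex hm)) = rotateTriple (matchingIndex e) := by
  induction e using Sym2.ind with
  | _ v w =>
  rw [mem_edgeSet, matching_adj, ne_eq, Fin.ext_iff] at he
  simp only [Sym2.map_mk, mem_edgeSet, matching_adj, ne_eq, Fin.ext_iff, matchingIndex,
    Sym2.lift_mk, rotateTripleVertex, he.2, min_self]
  omega

lemma isEdgeMap_map_rotateTripleVertex (hm : 3 ∣ m) :
    IsEdgeMap (matching m) (Sym2.map (rotateTripleVertex hm)) := fun e he =>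
  ⟨(map_rotateTripleVertex he).1, fun h =>
    rotateTriple_ne (matchingIndex e) ((map_rotateTripleVertex he).2.symm.trans (by rw [h]))⟩

lemma map_rotateTripleVertex_eq {hm : 3 ∣ m} {e e' : Sym2 (Fin (2 * m))}
    (he : e ∈ (matching m).edgeSet) (he' : e' ∈ (matching m).edgeSet)
    (h : rotateTriple (matchingIndex e) = matchingIndex e') :
    e.map (rotateTripleVertex hm) = e' :=
  matchingIndex_injOn (map_rotateTripleVertex he).1 he' ((map_rotateTripleVertex he).2.trans h)

lemma exists_mem_map_rotateTripleVertex_mem (hm : 3 ∣ m) {s : Finset (Sym2 (Fin (2 * m)))}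
    (hs : m < 3 * #s) (hsub : ↑s ⊆ (matching m).edgeSet) :
    ∃ e ∈ s, e.map (rotateTripleVertex hm) ∈ s := by
  refine exists_mem_map_mem_of_card_lt _ (fun e => matchingIndex e / 3) (B := range (m / 3))
    (fun e he => mem_range.2 ?_) (by rw [card_range]; omega) fun e he e' he' hne h => ?_
  · have := matchingIndex_lt (hsub he)
    omega
  have hne' : matchingIndex e ≠ matchingIndex e' :=
    fun h => hne (matchingIndex_injOn (hsub he) (hsub he') h)
  exact (rotateTriple_eq_or_eq hne' h).imp (map_rotateTripleVertex_eq (hsub he) (hsub he'))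
    (map_rotateTripleVertex_eq (hsub he') (hsub he))

end Matching

/-- every edge mapping of (3t-2)K₂ admits an f-free set of t edges,
while (3t-3)K₂ admits an edge mapping with no such set. -/
theorem stmt6 (t : ℕ) (ht : 2 ≤ t) :
    (∀ f : Sym2 (Fin (2*(3*t-2))) → Sym2 (Fin (2*(3*t-2))),
      IsEdgeMap (matching (3*t-2)) f →
      ∃ s : Finset (Sym2 (Fin (2*(3*t-2)))), s.card = t ∧
        ↑s ⊆ (matching (3*t-2)).edgeSet ∧ ∀ e ∈ s, f e ∉ s) ∧
    (∃ f : Sym2 (Fin (2*(3*t-3))) → Sym2 (Fin (2*(3*t-3))),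
      IsEdgeMap (matching (3*t-3)) f ∧
      ∀ s : Finset (Sym2 (Fin (2*(3*t-3)))), s.card = t →
        ↑s ⊆ (matching (3*t-3)).edgeSet → ∃ e ∈ s, f e ∈ s) := by
  refine ⟨fun f hf => ?_, ⟨_, isEdgeMap_map_rotateTripleVertex (by omega),
    fun s hs hsub => exists_mem_map_rotateTripleVertex_mem _ (by omega) hsub⟩⟩
  obtain ⟨S, hS⟩ := (matching (3*t-2)).edgeSet.toFinite.exists_finset_coe
  have hcard : #S = 3*t-2 := by rw [← Set.ncard_coe_finset, hS, ncard_edgeSet_matching]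
  obtain ⟨s, hsS, hst, hfree⟩ :=
    exists_free_subset_card_eq f S (t := t) (fun e he => (hf e (hS ▸ he)).2) (by omega)
  exact ⟨s, hst, hS ▸ coe_subset.2 hsS, hfree⟩
end

section
/- For every r ≥ 5/2 and integer t ≥ 1 (with r ≥ 2): if G is a graph whose maximum degree is at least 5r−4 and in which no edge is incident to all other edges, then for every function f: E(G) → E(G) with f(e) ∩ e = ∅ for all e, there is a copy of the star K_{1,r} in G (a vertex v together with r edges at v) such that for every edge e of the star, f(e) contains no vertex of the star. -/
open SimpleGraph

variable {V W : Type*}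

/-!
Fix a vertex `v` of maximum degree and join two neighbours `w, w'` of `v` by an arc `w → w'`
when `w' ∈ f s(v, w)`. Every neighbour has out-degree at most two, so every set of neighbours
has a vertex of total degree at most four inside it; greedily keeping such a vertex and deleting
it with its at most four neighbours yields an arc-free set of at least `deg v / 5 ≥ r - 4/5`
neighbours. Since `f s(v, w)` also misses `v` and `w`, any `r` of them span an `f`-exclusive star.
-/

open Finset

section Indep

variable {α : Type*} [DecidableEq α] (g : α → Finset α)

/-- `T` spans no arc of the digraph with out-neighbourhoods `g`, loops included. -/
def IsIndepOf (T : Finset α) : Prop := ∀ a ∈ T, ∀ b ∈ T, b ∉ g a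

variable {g}

theorem IsIndepOf.insert {T : Finset α} {x : α} (hT : IsIndepOf g T) (hx : x ∉ g x)
    (hxT : ∀ b ∈ T, b ∉ g x ∧ x ∉ g b) : IsIndepOf g (insert x T) := by
  intro a ha b hb
  rcases mem_insert.1 ha with rfl | haT <;> rcases mem_insert.1 hb with rfl | hbT
  exacts [hx, (hxT b hbT).1, (hxT a haT).2, hT a haT b hbT]

theorem exists_mem_card_filter_adj_le {k : ℕ} (hg : ∀ a, #(g a) ≤ k) {S : Finset α}
    (hS : S.Nonempty) : ∃ x ∈ S, #(S.filter fun b => b ∈ g x ∨ x ∈ g b) ≤ 2 * k := by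
  have hout : ∀ x, #(S.filter (· ∈ g x)) ≤ k := fun x =>
    (card_le_card fun b hb => (mem_filter.1 hb).2).trans (hg x)
  have hin : ∑ x ∈ S, #(S.filter fun b => x ∈ g b) = ∑ b ∈ S, #(S.filter (· ∈ g b)) := by
    simp only [card_filter]
    exact sum_comm
  have hsum : ∑ x ∈ S, (#(S.filter (· ∈ g x)) + #(S.filter fun b => x ∈ g b)) ≤
      ∑ _x ∈ S, 2 * k := by
    rw [sum_add_distrib, hin, ← sum_add_distrib]
    exact sum_le_sum fun x _ => by linarith [hout x]
  obtain ⟨x, hxS, hx⟩ := exists_le_of_sum_le hS hsum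
  refine ⟨x, hxS, ?_⟩
  rw [filter_or]
  exact (card_union_le _ _).trans hx

theorem exists_subset_isIndepOf {k : ℕ} (hg : ∀ a, #(g a) ≤ k) (S : Finset α)
    (hS : ∀ a ∈ S, a ∉ g a) : ∃ T ⊆ S, #S ≤ (2 * k + 1) * #T ∧ IsIndepOf g T := by
  induction S using Finset.strongInduction with
  | H S ih =>
  rcases S.eq_empty_or_nonempty with rfl | hne
  · exact ⟨∅, Subset.refl _, by simp, by simp [IsIndepOf]⟩
  obtain ⟨x, hxS, hx⟩ := exists_mem_card_filter_adj_le hg hne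
  set X := insert x (S.filter fun b => b ∈ g x ∨ x ∈ g b) with hX
  have hXS : X ⊆ S := insert_subset hxS (filter_subset _ _)
  obtain ⟨T, hTS, hcard, hT⟩ := ih (S \ X) (sdiff_ssubset hXS ⟨x, mem_insert_self _ _⟩)
    fun a ha => hS a (mem_sdiff.1 ha).1
  have hxT : x ∉ T := fun h => (mem_sdiff.1 (hTS h)).2 (mem_insert_self _ _)
  refine ⟨insert x T, insert_subset hxS (hTS.trans sdiff_subset), ?_, ?_⟩
  · have hsplit := card_sdiff_add_card_eq_card hXS
    have hXcard : #X ≤ 2 * k + 1 := (card_insert_le _ _).trans (by omega)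
    rw [card_insert_of_notMem hxT]
    linarith
  · refine hT.insert (hS x hxS) fun b hb => ?_
    have hbX : b ∉ X := (mem_sdiff.1 (hTS hb)).2
    have hbS : b ∈ S := (mem_sdiff.1 (hTS hb)).1
    simp only [hX, mem_insert, mem_filter, not_or, not_and_or] at hbX
    exact hbX.2.resolve_left (not_not.2 hbS)

end Indep

theorem Sym2.card_toFinset_le_two {α : Type*} [DecidableEq α] (z : Sym2 α) :
    #z.toFinset ≤ 2 := by
  rw [Sym2.card_toFinset]
  split <;> omega

section Star

variable {V : Type*} [DecidableEq V]

def IsExclusiveStar (f : Sym2 V → Sym2 V) (v : V) (s : Finset V) : Prop :=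
  ∀ w ∈ s, ∀ u ∈ f s(v, w), u ∉ insert v s

theorem IsExclusiveStar.mono {f : Sym2 V → Sym2 V} {v : V} {s t : Finset V}
    (ht : IsExclusiveStar f v t) (hst : s ⊆ t) : IsExclusiveStar f v s :=
  fun w hw u hu hus => ht w (hst hw) u hu (insert_subset_insert v hst hus)

theorem exists_isExclusiveStar [Fintype V] (G : SimpleGraph V) [DecidableRel G.Adj]
    (f : Sym2 V → Sym2 V) (v : V)
    (hf : ∀ w, G.Adj v w → sym2Disjoint s(v, w) (f s(v, w))) :
    ∃ s ⊆ G.neighborFinset v, G.degree v ≤ 5 * #s ∧ IsExclusiveStar f v s := by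
  set g : V → Finset V := fun w => (f s(v, w)).toFinset
  have hleaf : ∀ w ∈ G.neighborFinset v, w ∉ g w := fun w hw hmem =>
    hf w ((G.mem_neighborFinset v w).1 hw) w (Sym2.mem_mk_right v w) (Sym2.mem_toFinset.1 hmem)
  obtain ⟨T, hTN, hcard, hT⟩ :=
    exists_subset_isIndepOf (fun w => (f s(v, w)).card_toFinset_le_two) _ hleaf
  refine ⟨T, hTN, by rwa [card_neighborFinset_eq_degree] at hcard, ?_⟩
  intro w hw u hu huT
  rcases mem_insert.1 huT with rfl | huT
  · exact hf w ((G.mem_neighborFinset _ w).1 (hTN hw)) u (Sym2.mem_mk_left u w) hu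
  · exact hT w hw u huT (Sym2.mem_toFinset.2 hu)

end Star

theorem stmt11_general {V : Type*} [Fintype V] [DecidableEq V] (r : ℕ)
    (G : SimpleGraph V) [DecidableRel G.Adj]
    (hdeg : ∃ v, 5*r - 4 ≤ G.degree v)
    (f : Sym2 V → Sym2 V) (hf : IsDisjEdgeMap G f) :
    ∃ (v : V) (s : Finset V), s.card = r ∧ (∀ w ∈ s, G.Adj v w) ∧
      ∀ w ∈ s, ∀ u ∈ f s(v, w), u ∉ insert v s := by
  obtain ⟨v, hv⟩ := hdeg
  obtain ⟨T, hTN, hcard, hT⟩ :=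
    exists_isExclusiveStar G f v fun w hw => (hf s(v, w) (G.mem_edgeSet.2 hw)).2
  obtain ⟨s, hsT, hs⟩ := exists_subset_card_eq (show r ≤ #T by omega)
  exact ⟨v, s, hs, fun w hw => (G.mem_neighborFinset v w).1 (hTN (hsT hw)), hT.mono hsT⟩

/-- if G has maximum degree ≥ 5r-4 and no edge incident to all other
edges, then for every f with f(e) ∩ e = ∅ there is an f-exclusive copy of K_{1,r}. -/
theorem stmt11 {V : Type*} [Fintype V] [DecidableEq V] (r : ℕ) (hr : 2 ≤ r)
    (G : SimpleGraph V) [DecidableRel G.Adj]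
    (hdeg : ∃ v, 5*r - 4 ≤ G.degree v)
    (hinc : ∀ e ∈ G.edgeSet, ∃ e' ∈ G.edgeSet, e' ≠ e ∧ sym2Disjoint e e')
    (f : Sym2 V → Sym2 V) (hf : IsDisjEdgeMap G f) :
    ∃ (v : V) (s : Finset V), s.card = r ∧ (∀ w ∈ s, G.Adj v w) ∧
      ∀ w ∈ s, ∀ u ∈ f s(v, w), u ∉ insert v s :=
  stmt11_general r G hdeg f hf
end

section
/- For every t ≥ 2 there exists a constant C_t > 0 such that every n-vertex graph H with more than ex(n, tK₂) edges and maximum degree at most n/3 contains at least C_t · n^t copies of tK₂ (t pairwise disjoint edges). -/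
open SimpleGraph

variable {V W : Type*}

/-!
The graph `K_{t-1, n-t+1}` has a vertex cover of size `t - 1`, hence no `tK₂`, so
`e(H) > (t-1)(n-t+1)`. As all degrees are at most `n/3`, an edge of `H` meets at most `2n/3`
edges, so every matching of size `i` extends in at least `e(H) - 2in/3` ways, which is at
least `n/12` for `i < t`: for `2t ≤ n ≤ 4(t-1)` the bounds `e(H) > (t-1)(n-t+1)` and
`6 e(H) ≤ n²` are incompatible. Counting each `(i+1)`-matching from its `i + 1` predecessors
gives at least `(n/12)^t / t!` copies of `tK₂`.
-/

instance : Std.Symm (sym2Disjoint : Sym2 V → Sym2 V → Prop) :=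
  ⟨fun _ _ h v hv hv' => h v hv' hv⟩

instance : Std.Irrefl (sym2Disjoint : Sym2 V → Sym2 V → Prop) :=
  ⟨Sym2.ind fun x y h => h x (Sym2.mem_mk_left x y) (Sym2.mem_mk_left x y)⟩

section PairwiseSubsets

open Finset

variable {β : Type*} [DecidableEq β] {r : β → β → Prop}

open scoped Classical in
noncomputable def pairwiseSubsets (r : β → β → Prop) (E : Finset β) (t : ℕ) :
    Finset (Finset β) :=
  {s ∈ E.powersetCard t | (s : Set β).Pairwise r}

lemma mem_pairwiseSubsets {E s : Finset β} {t : ℕ} :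
    s ∈ pairwiseSubsets r E t ↔ s ⊆ E ∧ #s = t ∧ (s : Set β).Pairwise r := by
  simp [pairwiseSubsets, and_assoc]

variable [DecidableRel r] {E : Finset β} {D : ℕ}

lemma sub_mul_le_card_compatible (hD : ∀ e ∈ E, #{e' ∈ E | ¬ r e e'} ≤ D) {s : Finset β}
    (hs : s ⊆ E) : #E - #s * D ≤ #{e ∈ E | ∀ e' ∈ s, r e' e} := by
  have hblocked :
      {e ∈ E | ¬ ∀ e' ∈ s, r e' e} ⊆ s.biUnion fun e' => {e ∈ E | ¬ r e' e} := by
    intro e he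
    simp only [mem_filter, not_forall] at he
    obtain ⟨heE, e', he's, hr⟩ := he
    exact mem_biUnion.2 ⟨e', he's, mem_filter.2 ⟨heE, hr⟩⟩
  have := card_filter_add_card_filter_not (s := E) (fun e => ∀ e' ∈ s, r e' e)
  have := (card_le_card hblocked).trans
    (card_biUnion_le_card_mul s _ D fun e' he' => hD e' (hs he'))
  omega

variable [Std.Symm r] [Std.Irrefl r]

lemma card_pairwiseSubsets_mul_le (hD : ∀ e ∈ E, #{e' ∈ E | ¬ r e e'} ≤ D) (t : ℕ) :
    #(pairwiseSubsets r E t) * (#E - t * D) ≤ #(pairwiseSubsets r E (t + 1)) * (t + 1) := by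
  refine card_mul_le_card_mul (· ⊆ ·) (fun s hs => ?_) (fun S hS => ?_)
  · obtain ⟨hsE, rfl, hsr⟩ := mem_pairwiseSubsets.1 hs
    have hnotMem : ∀ e ∈ {e ∈ E | ∀ e' ∈ s, r e' e}, e ∉ s :=
      fun e he hes => Std.Irrefl.irrefl e ((mem_filter.1 he).2 e hes)
    refine (sub_mul_le_card_compatible hD hsE).trans (card_le_card_of_injOn (insert · s) ?_ ?_)
    · intro e he
      have he' := mem_filter.1 (mem_coe.1 he)
      refine (mem_bipartiteAbove _).2 ⟨mem_pairwiseSubsets.2 ⟨insert_subset he'.1 hsE,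
        card_insert_of_notMem (hnotMem e he), ?_⟩, subset_insert e s⟩
      rw [coe_insert]
      exact hsr.insert_of_symm fun e' he's _ => Std.Symm.symm _ _ (he'.2 e' he's)
    · intro e he e' _ (h : insert e s = insert e' s)
      have : e ∈ insert e' s := h ▸ mem_insert_self e s
      exact (mem_insert.1 this).resolve_right (hnotMem e he)
  · obtain ⟨-, hS, -⟩ := mem_pairwiseSubsets.1 hS
    calc #(bipartiteBelow (· ⊆ ·) (pairwiseSubsets r E t) S) ≤ #(S.powersetCard t) := by
          refine card_le_card fun s hs => ?_
          obtain ⟨hs, hsS⟩ := (mem_bipartiteBelow _).1 hs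
          exact mem_powersetCard.2 ⟨hsS, (mem_pairwiseSubsets.1 hs).2.1⟩
      _ = t + 1 := by rw [card_powersetCard, hS, Nat.choose_succ_self_right]

/- Thanks to truncated subtraction the bound needs no hypothesis `(t - 1) * D ≤ #E`. -/
open Nat in
lemma sub_pow_le_factorial_mul_card_pairwiseSubsets
    (hD : ∀ e ∈ E, #{e' ∈ E | ¬ r e e'} ≤ D) (t : ℕ) :
    (#E - (t - 1) * D) ^ t ≤ t ! * #(pairwiseSubsets r E t) := by
  induction t with
  | zero => simp [pairwiseSubsets, Finset.filter_singleton]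
  | succ t ih =>
    calc (#E - (t + 1 - 1) * D) ^ (t + 1) = (#E - t * D) ^ t * (#E - t * D) := by
          rw [Nat.add_sub_cancel, pow_succ]
      _ ≤ (#E - (t - 1) * D) ^ t * (#E - t * D) := by gcongr; omega
      _ ≤ t ! * #(pairwiseSubsets r E t) * (#E - t * D) := by gcongr
      _ ≤ t ! * (#(pairwiseSubsets r E (t + 1)) * (t + 1)) := by
          rw [mul_assoc]; exact Nat.mul_le_mul_left _ (card_pairwiseSubsets_mul_le hD t)
      _ = (t + 1)! * #(pairwiseSubsets r E (t + 1)) := by rw [factorial_succ]; ring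

end PairwiseSubsets

section EdgeCounting

open Finset

variable [Fintype V] {G : SimpleGraph V} [DecidableRel G.Adj] {d : ℕ}

lemma two_mul_card_edgeFinset_le (hd : ∀ v, G.degree v ≤ d) :
    2 * #G.edgeFinset ≤ Fintype.card V * d := by
  rw [← G.sum_degrees_eq_twice_card_edges]
  simpa using sum_le_sum fun v (_ : v ∈ univ) => hd v

open scoped Classical in
lemma card_filter_not_sym2Disjoint_le (hd : ∀ v, G.degree v ≤ d) (e : Sym2 V) :
    #{e' ∈ G.edgeFinset | ¬ sym2Disjoint e e'} ≤ 2 * d := by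
  induction e using Sym2.ind with
  | _ x y =>
    have hsub : {e' ∈ G.edgeFinset | ¬ sym2Disjoint s(x, y) e'} ⊆
        G.incidenceFinset x ∪ G.incidenceFinset y := by
      intro e' he'
      simp only [sym2Disjoint, not_forall, not_not, mem_filter, mem_edgeFinset] at he'
      obtain ⟨he', v, hv, hve'⟩ := he'
      rcases Sym2.mem_iff.1 hv with rfl | rfl
      · exact mem_union_left _ ((mem_incidenceFinset _ _ _).2 ⟨he', hve'⟩)
      · exact mem_union_right _ ((mem_incidenceFinset _ _ _).2 ⟨he', hve'⟩)
    calc _ ≤ #(G.incidenceFinset x) + #(G.incidenceFinset y) :=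
          (card_le_card hsub).trans (card_union_le _ _)
      _ ≤ 2 * d := by
          rw [card_incidenceFinset_eq_degree, card_incidenceFinset_eq_degree]
          linarith [hd x, hd y]

end EdgeCounting

section ExtremalNumber

variable {n : ℕ}

lemma le_exNum {G : SimpleGraph V} (H : SimpleGraph (Fin n)) (h : ¬ Contains G H) :
    H.edgeSet.ncard ≤ exNum n G := by
  refine le_csSup ⟨Fintype.card (Sym2 (Fin n)), ?_⟩ ⟨H, rfl, h⟩
  rintro m ⟨H', rfl, -⟩
  simpa using Set.ncard_le_ncard (Set.subset_univ H'.edgeSet)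

lemma le_exNum_of_card_lt [Fintype V] (G : SimpleGraph V) (hn : n < Fintype.card V)
    (H : SimpleGraph (Fin n)) : H.edgeSet.ncard ≤ exNum n G :=
  le_exNum H fun ⟨φ, hφ⟩ => (Fintype.card_le_of_injective φ hφ).not_gt (by simpa using hn)

lemma le_vertexCoverNum_matching (t : ℕ) : (t : ℕ∞) ≤ vertexCoverNum (matching t) := by
  obtain ⟨c, hc, hcover⟩ := vertexCoverNum_exists (matching t)
  have hpick : ∀ i : Fin t, ∃ v ∈ c, (v : ℕ) / 2 = i := by
    intro i
    have hadj : (matching t).Adj ⟨2 * i, by omega⟩ ⟨2 * i + 1, by omega⟩ := by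
      simp only [matching, fromRel_adj, ne_eq, Fin.mk.injEq]
      omega
    rcases hcover hadj with h | h
    · exact ⟨_, h, by simp⟩
    · exact ⟨_, h, by simp; omega⟩
  choose g hgc hgi using hpick
  have hg : Function.Injective g := fun i j h => Fin.ext (by rw [← hgi i, ← hgi j, h])
  calc (t : ℕ∞) = ENat.card (Fin t) := by simp
    _ ≤ (Set.range g).encard := hg.encard_range
    _ ≤ c.encard := Set.encard_le_encard (Set.range_subset_iff.2 hgc)
    _ = vertexCoverNum (matching t) := hc

lemma not_contains_matching_of_vertexCoverNum_lt {H : SimpleGraph W} {t : ℕ}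
    (h : vertexCoverNum H < t) : ¬ Contains (matching t) H := fun ⟨φ, hφ⟩ =>
  ((le_vertexCoverNum_matching t).trans
    (IsContained.vertexCoverNum_le_vertexCoverNum ⟨⟨φ, hφ⟩⟩)).not_gt h

lemma vertexCoverNum_completeBipartiteGraph_le (α β : Type*) :
    vertexCoverNum (completeBipartiteGraph α β) ≤ ENat.card α := by
  have hcover : (completeBipartiteGraph α β).IsVertexCover (Set.range Sum.inl) := by
    rintro (a | b) (a' | b') h <;> simp_all
  rw [← Set.encard_univ, ← Sum.inl_injective.encard_image, Set.image_univ]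
  exact hcover.vertexCoverNum_le

lemma mul_sub_le_exNum_matching {k t : ℕ} (hkt : k < t) (hkn : k ≤ n) :
    k * (n - k) ≤ exNum n (matching t) := by
  let K := completeBipartiteGraph (Fin k) (Fin (n - k))
  let f : Fin n ≃ Fin k ⊕ Fin (n - k) := (finCongr (by omega)).trans finSumFinEquiv.symm
  have hiso : K.comap f ≃g K := Iso.comap f K
  have hedges : (K.comap f).edgeSet.ncard = k * (n - k) := by
    rw [Set.ncard_def, ← ENat.card_coe_set_eq, ENat.card_congr hiso.mapEdgeSet,
      ENat.card_coe_set_eq, encard_edgeSet_completeBipartiteGraph]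
    simp only [ENat.card_eq_coe_fintype_card, Fintype.card_fin, ← Nat.cast_mul,
      ENat.toNat_natCast]
  have hcover : vertexCoverNum (K.comap f) < t := by
    rw [vertexCoverNum_congr hiso]
    exact (vertexCoverNum_completeBipartiteGraph_le _ _).trans_lt (by simpa using hkt)
  exact hedges ▸ le_exNum _ (not_contains_matching_of_vertexCoverNum_lt hcover)

end ExtremalNumber

lemma le_twelve_mul_sub {a n e d : ℕ} (ha : 1 ≤ a) (hn : 2 * a + 2 ≤ n) (he : a * (n - a) < e)
    (hd : 3 * d ≤ n) (hhand : 2 * e ≤ n * d) : n ≤ 12 * (e - a * (2 * d)) := by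
  have he' : (a : ℝ) * (n - a) + 1 ≤ e := by
    have := Nat.cast_le (α := ℝ).2 (Nat.succ_le_of_lt he)
    push_cast [Nat.cast_sub (show a ≤ n by omega)] at this
    linarith
  have hd' : 3 * (d : ℝ) ≤ n := by exact_mod_cast hd
  have hhand' : 2 * (e : ℝ) ≤ n * d := by exact_mod_cast hhand
  have ha' : (1 : ℝ) ≤ a := by exact_mod_cast ha
  have hn' : 2 * (a : ℝ) + 2 ≤ n := by exact_mod_cast hn
  -- `6e ≤ n²` and `e > a (n - a)` leave no room for `n ≤ 4a`
  have h4a : 4 * (a : ℝ) < n := by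
    by_contra! h
    nlinarith [mul_nonneg (by linarith : (0 : ℝ) ≤ n - 2 * a - 2)
      (by linarith : (0 : ℝ) ≤ 4 * a - n)]
  have hkey : (n : ℝ) ≤ 12 * (e - a * (2 * d)) := by nlinarith
  have hle : a * (2 * d) ≤ e := by
    have : (a : ℝ) * (2 * d) ≤ e := by nlinarith
    exact_mod_cast this
  exact_mod_cast (show ((n : ℕ) : ℝ) ≤ ((12 * (e - a * (2 * d)) : ℕ) : ℝ) by
    push_cast [Nat.cast_sub hle]; exact hkey)

open Finset Nat in
/-- for t ≥ 2 there is C_t > 0 such that every n-vertex graph with more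
than ex(n, tK₂) edges and maximum degree ≤ n/3 contains at least C_t·n^t copies
of tK₂. -/
theorem stmt12 (t : ℕ) (ht : 2 ≤ t) :
    ∃ C : ℝ, 0 < C ∧ ∀ (n : ℕ) (H : SimpleGraph (Fin n)),
      exNum n (matching t) < H.edgeSet.ncard →
      (∀ v, 3 * {w | H.Adj v w}.ncard ≤ n) →
      C * (n : ℝ)^t ≤
        (({s : Finset (Sym2 (Fin n)) | s.card = t ∧ ↑s ⊆ H.edgeSet ∧
          ∀ e ∈ s, ∀ e' ∈ s, e ≠ e' → sym2Disjoint e e'}).ncard : ℝ) := by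
  classical
  refine ⟨1 / (12 ^ t * t !), by positivity, fun n H hex hdeg => ?_⟩
  have hn : 2 * t ≤ n := by
    by_contra! h
    exact hex.not_ge (le_exNum_of_card_lt (matching t) (by simpa using h) H)
  have hedges : H.edgeSet.ncard = #H.edgeFinset := by rw [← coe_edgeFinset, Set.ncard_coe_finset]
  have hdeg' : ∀ v, H.degree v ≤ n / 3 := fun v => by
    have : {w | H.Adj v w}.ncard = H.degree v := by
      rw [← Nat.card_coe_set_eq, Nat.card_eq_fintype_card]
      exact card_neighborSet_eq_degree H v
    have := hdeg v
    omega
  have hbound : n ≤ 12 * (#H.edgeFinset - (t - 1) * (2 * (n / 3))) := by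
    refine le_twelve_mul_sub (by omega) (by omega) ?_ (by omega)
      (by simpa using two_mul_card_edgeFinset_le hdeg')
    exact hedges ▸ (mul_sub_le_exNum_matching (by omega) (by omega)).trans_lt hex
  have hcount := sub_pow_le_factorial_mul_card_pairwiseSubsets
    (fun e _ => card_filter_not_sym2Disjoint_le hdeg' e) t
  have hset : {s : Finset (Sym2 (Fin n)) | s.card = t ∧ ↑s ⊆ H.edgeSet ∧
      ∀ e ∈ s, ∀ e' ∈ s, e ≠ e' → sym2Disjoint e e'} =
      pairwiseSubsets sym2Disjoint H.edgeFinset t := by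
    ext s
    simp only [Set.mem_ofPred_eq, mem_coe, mem_pairwiseSubsets, ← coe_subset, coe_edgeFinset,
      Set.Pairwise, _root_.and_left_comm]
  have hpow : n ^ t ≤ #(pairwiseSubsets sym2Disjoint H.edgeFinset t) * (12 ^ t * t !) :=
    calc n ^ t ≤ (12 * (#H.edgeFinset - (t - 1) * (2 * (n / 3)))) ^ t := by gcongr
      _ ≤ 12 ^ t * (t ! * #(pairwiseSubsets sym2Disjoint H.edgeFinset t)) := by
          rw [mul_pow]; gcongr
      _ = _ := by ring
  rw [hset, Set.ncard_coe_finset, div_mul_eq_mul_div, one_mul, div_le_iff₀ (by positivity)]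
  exact_mod_cast hpow
end

section
/- There exists a graph H on n vertices with n edges (namely the star K_{1,n−1} plus one edge between two leaves) and a map f: E(H) → E(H) with f(e) ≠ e, |f(e)∩e| ≤ 1 for all e, such that H contains no f-free copy of 2K₂. Hence h(n, 2K₂) ≥ n for all n ≥ 4. -/
open SimpleGraph

variable {V W : Type*}

/-! Two disjoint edges of the star plus the edge `uv` cannot both contain the center, so one
of them is `uv`, and `f` sends the other one to it. As a copy of `2K₂` is just a pair of
disjoint edges, no copy is `f`-free. -/

namespace SimpleGraph

def starAddEdge (c u v : W) : SimpleGraph W :=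
  fromRel fun x y => x = c ∨ (x = u ∧ y = v)

variable {c u v w : W}

theorem starAddEdge_adj {x y : W} :
    (starAddEdge c u v).Adj x y ↔ x ≠ y ∧ (x = c ∨ y = c ∨ s(x, y) = s(u, v)) := by
  simp only [starAddEdge, fromRel_adj, Sym2.eq_iff]
  tauto

theorem mem_or_eq_of_mem_edgeSet_starAddEdge {e : Sym2 W}
    (he : e ∈ (starAddEdge c u v).edgeSet) : c ∈ e ∨ e = s(u, v) := by
  induction e using Sym2.ind with
  | _ x y =>
    obtain ⟨-, rfl | rfl | h⟩ := starAddEdge_adj.mp he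
    · exact Or.inl (Sym2.mem_mk_left _ _)
    · exact Or.inl (Sym2.mem_mk_right _ _)
    · exact Or.inr h

theorem edgeSet_starAddEdge (huv : u ≠ v) :
    (starAddEdge c u v).edgeSet = insert s(u, v) ((fun x => s(c, x)) '' {c}ᶜ) := by
  ext e
  induction e using Sym2.ind with
  | _ x y =>
    simp only [mem_edgeSet, starAddEdge_adj, Set.mem_insert_iff, Set.mem_image,
      Set.mem_compl_singleton_iff]
    constructor
    · rintro ⟨hxy, rfl | rfl | h⟩
      · exact Or.inr ⟨y, hxy.symm, rfl⟩
      · exact Or.inr ⟨x, hxy, Sym2.eq_swap⟩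
      · exact Or.inl h
    · rintro (h | ⟨z, hz, h⟩)
      · exact ⟨fun hxy => huv (Sym2.mk_isDiag_iff.mp (h ▸ hxy ▸ rfl)), Or.inr (Or.inr h)⟩
      · rcases Sym2.eq_iff.mp h with ⟨rfl, rfl⟩ | ⟨rfl, rfl⟩
        · exact ⟨hz.symm, Or.inl rfl⟩
        · exact ⟨hz, Or.inr (Or.inl rfl)⟩

theorem ncard_edgeSet_starAddEdge [Finite W] (hcu : c ≠ u) (hcv : c ≠ v) (huv : u ≠ v) :
    (starAddEdge c u v).edgeSet.ncard = Nat.card W := by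
  have hnotMem : s(u, v) ∉ (fun x => s(c, x)) '' {c}ᶜ := by
    rintro ⟨x, -, h⟩
    rcases Sym2.eq_iff.mp h with ⟨h, -⟩ | ⟨h, -⟩
    exacts [hcu h, hcv h]
  rw [edgeSet_starAddEdge huv, Set.ncard_insert_of_notMem hnotMem,
    Set.ncard_image_of_injective _ fun _ _ => Sym2.congr_right.mp,
    ← Set.ncard_add_ncard_compl {c}, Set.ncard_singleton, add_comm]

def starAddEdgeMap [DecidableEq W] (c u v w : W) (e : Sym2 W) : Sym2 W :=
  if e = s(u, v) then s(c, w) else s(u, v)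

variable [DecidableEq W]

theorem starAddEdgeMap_self : starAddEdgeMap c u v w s(u, v) = s(c, w) := if_pos rfl

theorem starAddEdgeMap_of_ne {e : Sym2 W} (he : e ≠ s(u, v)) :
    starAddEdgeMap c u v w e = s(u, v) := if_neg he

theorem isEdgeMap_starAddEdgeMap (hcu : c ≠ u) (hcv : c ≠ v) (huv : u ≠ v) (hcw : c ≠ w) :
    IsEdgeMap (starAddEdge c u v) (starAddEdgeMap c u v w) := by
  intro e he
  by_cases heuv : e = s(u, v)
  · subst heuv
    rw [starAddEdgeMap_self]
    refine ⟨starAddEdge_adj.mpr ⟨hcw, Or.inl rfl⟩, fun h => ?_⟩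
    rcases Sym2.eq_iff.mp h with ⟨h, -⟩ | ⟨h, -⟩
    exacts [hcu h, hcv h]
  · rw [starAddEdgeMap_of_ne heuv]
    exact ⟨starAddEdge_adj.mpr ⟨huv, Or.inr (Or.inr rfl)⟩, Ne.symm heuv⟩

theorem starAddEdgeMap_eq_or_eq_of_sym2Disjoint {e e' : Sym2 W}
    (he : e ∈ (starAddEdge c u v).edgeSet) (he' : e' ∈ (starAddEdge c u v).edgeSet)
    (hdisj : sym2Disjoint e e') :
    starAddEdgeMap c u v w e = e' ∨ starAddEdgeMap c u v w e' = e := by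
  have hne {e : Sym2 W} (hdisj : sym2Disjoint s(u, v) e) : e ≠ s(u, v) := by
    rintro rfl
    exact hdisj u (Sym2.mem_mk_left u v) (Sym2.mem_mk_left u v)
  rcases mem_or_eq_of_mem_edgeSet_starAddEdge he with hc | rfl
  · rcases mem_or_eq_of_mem_edgeSet_starAddEdge he' with hc' | rfl
    · exact absurd hc' (hdisj c hc)
    · exact Or.inl (starAddEdgeMap_of_ne (hne fun x hx hx' => hdisj x hx' hx))
  · exact Or.inr (starAddEdgeMap_of_ne (hne hdisj))

end SimpleGraph

theorem noFreeCopy_matching_two {H : SimpleGraph W} {f : Sym2 W → Sym2 W}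
    (h : ∀ e ∈ H.edgeSet, ∀ e' ∈ H.edgeSet, sym2Disjoint e e' → f e = e' ∨ f e' = e) :
    NoFreeCopy (matching 2) H f := by
  intro φ hφ hfree
  have h01 : (matching 2).Adj 0 1 := ⟨by decide, Or.inl (by decide)⟩
  have h23 : (matching 2).Adj 2 3 := ⟨by decide, Or.inl (by decide)⟩
  have hcopy01 : s(φ 0, φ 1) ∈ copyEdges (matching 2) H φ := ⟨s(0, 1), h01, rfl⟩
  have hcopy23 : s(φ 2, φ 3) ∈ copyEdges (matching 2) H φ := ⟨s(2, 3), h23, rfl⟩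
  have hdisj : sym2Disjoint s(φ 0, φ 1) s(φ 2, φ 3) := by
    simp only [sym2Disjoint, Sym2.mem_iff, not_or]
    rintro x (rfl | rfl) <;>
      exact ⟨fun h => absurd (hφ h) (by decide), fun h => absurd (hφ h) (by decide)⟩
  rcases h _ (φ.map_adj h01) _ (φ.map_adj h23) hdisj with hf | hf
  · exact hfree _ hcopy01 (hf ▸ hcopy23)
  · exact hfree _ hcopy23 (hf ▸ hcopy01)

theorem le_hNum {n m : ℕ} {G : SimpleGraph V}
    (h : ∃ (H : SimpleGraph (Fin n)) (f : Sym2 (Fin n) → Sym2 (Fin n)),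
      H.edgeSet.ncard = m ∧ IsEdgeMap H f ∧ NoFreeCopy G H f) :
    m ≤ hNum n G := by
  refine le_csSup ⟨Nat.card (Sym2 (Fin n)), ?_⟩ h
  rintro _ ⟨H, -, rfl, -⟩
  exact Set.ncard_le_card _

/-- there is an n-vertex graph with n edges (the star K_{1,n-1} plus an
edge between two leaves) admitting an edge mapping with no f-free copy of 2K₂;
hence h(n, 2K₂) ≥ n for n ≥ 4. -/
theorem stmt17 (n : ℕ) (hn : 4 ≤ n) :
    (∃ (H : SimpleGraph (Fin n)) (f : Sym2 (Fin n) → Sym2 (Fin n)),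
      H.edgeSet.ncard = n ∧ IsEdgeMap H f ∧ NoFreeCopy (matching 2) H f) ∧
    n ≤ hNum n (matching 2) := by
  let ι : Fin 4 → Fin n := Fin.castLE hn
  have hι {i j : Fin 4} (hij : i ≠ j) : ι i ≠ ι j := (Fin.castLE_injective hn).ne hij
  have hH : ∃ (H : SimpleGraph (Fin n)) (f : Sym2 (Fin n) → Sym2 (Fin n)),
      H.edgeSet.ncard = n ∧ IsEdgeMap H f ∧ NoFreeCopy (matching 2) H f := by
    refine ⟨starAddEdge (ι 0) (ι 1) (ι 2), starAddEdgeMap (ι 0) (ι 1) (ι 2) (ι 3),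
      ?_, ?_, ?_⟩
    · rw [ncard_edgeSet_starAddEdge (hι (by decide)) (hι (by decide)) (hι (by decide)),
        Nat.card_fin]
    · exact isEdgeMap_starAddEdgeMap (hι (by decide)) (hι (by decide)) (hι (by decide))
        (hι (by decide))
    · exact noFreeCopy_matching_two fun _ he _ he' =>
        starAddEdgeMap_eq_or_eq_of_sym2Disjoint he he'
  exact ⟨hH, le_hNum hH⟩
end
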